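/- (A system with no solution having greatest second component.) Let φ : ℝ → ℝ be defined by φ(x) = x^3 sin(1/x) for x ≠ 0 and φ(0) = 0 (so φ is continuously differentiable, φ(0) = 0, and φ takes both signs in every neighborhood of 0). Consider the system y1' = 3|y1|^{2/3}, y2' = φ'(y1^{1/3}), with y1(0) = y2(0) = 0, where y1^{1/3} is the real cube root; a solution on [0,ε] is a pair of differentiable functions (ψ1, ψ2) : [0,ε] → ℝ² satisfying these equations and initial conditions. Then for every ε > 0 there is NO solution (ψ1, ψ2) on [0,ε] such that every solution (χ1, χ2) on [0,ε] satisfies χ2(t) ≤ ψ2(t) for all t ∈ [0,ε]. -/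

import Mathlib

/-!
A solution rests at `0` up to some time `a` and leaves it afterwards; where `ψ1 > 0` the equation
makes `ψ1 ^ (1/3)` grow with slope one, so `ψ1 = (t - a)³`, and then `ψ2 = 0` on `[0, a]` and
`ψ2 = φ (t - a)` on `[a, ε]`. Since `φ` takes both signs arbitrarily close to `0`, such a `ψ2` drops
below the zero solution if `a < ε`, and below the solution `(t³, φ t)` if `a = ε`.
-/

open Set

/-- The function `φ(x) = x³ sin(1/x)` for `x ≠ 0`, `φ(0) = 0`. -/
noncomputable def Phi10 : ℝ → ℝ := fun x => if x = 0 then 0 else x ^ 3 * Real.sin (1 / x)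

/-- The real cube root. -/
noncomputable def cbrt10 (y : ℝ) : ℝ := Real.sign y * |y| ^ ((1 : ℝ) / 3)

/-- A solution of the system `y1' = 3|y1|^(2/3)`, `y2' = Φ'(y1^(1/3))`,
`y1 0 = y2 0 = 0` on `[0, ε]`. -/
def IsSolSys10 (ε : ℝ) (ψ1 ψ2 : ℝ → ℝ) : Prop :=
  ψ1 0 = 0 ∧ ψ2 0 = 0 ∧
    ∀ t ∈ Icc (0:ℝ) ε,
      HasDerivWithinAt ψ1 (3 * |ψ1 t| ^ ((2 : ℝ) / 3)) (Icc (0:ℝ) ε) t ∧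
      HasDerivWithinAt ψ2 (deriv Phi10 (cbrt10 (ψ1 t))) (Icc (0:ℝ) ε) t

open Filter Topology Asymptotics

theorem eqOn_Icc_of_hasDerivAt_eq {f g f' : ℝ → ℝ} {a b : ℝ}
    (hf : ContinuousOn f (Icc a b)) (hg : ContinuousOn g (Icc a b))
    (hf' : ∀ x ∈ Ioo a b, HasDerivAt f (f' x) x) (hg' : ∀ x ∈ Ioo a b, HasDerivAt g (f' x) x)
    (ha : f a = g a) : EqOn f g (Icc a b) := by
  intro t ht
  rcases ht.1.eq_or_lt with rfl | hat
  · exact ha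
  obtain ⟨c, -, hc⟩ := exists_hasDerivAt_eq_slope (f - g) (fun _ => 0) hat
    ((hf.sub hg).mono (Icc_subset_Icc_right ht.2))
    (fun x hx => (hf' x ⟨hx.1, hx.2.trans_le ht.2⟩).sub (hg' x ⟨hx.1, hx.2.trans_le ht.2⟩)
      |>.congr_deriv (sub_self _))
  simpa [ha, eq_comm (a := (0 : ℝ)), sub_eq_zero, hat.ne'] using hc

theorem MonotoneOn.exists_eq_on_Icc_lt_on_Ioc {f : ℝ → ℝ} {b c : ℝ} (hbc : b ≤ c)
    (hmono : MonotoneOn f (Icc b c)) (hcont : ContinuousOn f (Icc b c)) :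
    ∃ a ∈ Icc b c, (∀ t ∈ Icc b a, f t = f b) ∧ ∀ t ∈ Ioc a c, f b < f t := by
  set Z := Icc b c ∩ f ⁻¹' {f b}
  have hZ : BddAbove Z := ⟨c, fun x hx => hx.1.2⟩
  have haZ : sSup Z ∈ Z := (hcont.preimage_isClosed_of_isClosed isClosed_Icc isClosed_singleton)
    |>.csSup_mem ⟨b, ⟨left_mem_Icc.2 hbc, rfl⟩⟩ hZ
  refine ⟨sSup Z, haZ.1, fun t ht => ?_, fun t ht => ?_⟩
  · have htI : t ∈ Icc b c := ⟨ht.1, ht.2.trans haZ.1.2⟩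
    exact le_antisymm (haZ.2 ▸ hmono htI haZ.1 ht.2) (hmono (left_mem_Icc.2 hbc) htI ht.1)
  · have htI : t ∈ Icc b c := ⟨haZ.1.1.trans ht.1.le, ht.2⟩
    refine (hmono (left_mem_Icc.2 hbc) htI htI.1).lt_of_ne fun h => ?_
    exact (le_csSup hZ ⟨htI, h.symm⟩).not_gt ht.1

theorem Phi10_zero : Phi10 0 = 0 := if_pos rfl

theorem abs_Phi10_le (x : ℝ) : |Phi10 x| ≤ |x| ^ 3 := by
  unfold Phi10
  split_ifs with hx
  · simp [hx]
  · rw [abs_mul, abs_pow]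
    exact mul_le_of_le_one_right (by positivity) (Real.abs_sin_le_one _)

theorem hasDerivAt_Phi10_zero : HasDerivAt Phi10 0 0 := by
  rw [hasDerivAt_iff_isLittleO_nhds_zero]
  have hbig : Phi10 =O[𝓝 0] fun h => h ^ 3 :=
    IsBigO.of_bound 1 (Eventually.of_forall fun h => by simpa [norm_pow] using abs_Phi10_le h)
  simpa [Phi10_zero] using hbig.trans_isLittleO (isLittleO_pow_id (by norm_num))

theorem differentiable_Phi10 : Differentiable ℝ Phi10 := by
  intro x
  rcases eq_or_ne x 0 with rfl | hx
  · exact hasDerivAt_Phi10_zero.differentiableAt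
  · have hloc : (fun y : ℝ => y ^ 3 * Real.sin (1 / y)) =ᶠ[𝓝 x] Phi10 := by
      filter_upwards [isOpen_ne.mem_nhds hx] with y hy
      simp [Phi10, hy]
    refine DifferentiableAt.congr_of_eventuallyEq ?_ hloc.symm
    fun_prop (disch := assumption)

theorem exists_mem_Ioo_sin_one_div_eq (θ : ℝ) {δ : ℝ} (hδ : 0 < δ) :
    ∃ x ∈ Ioo 0 δ, Real.sin (1 / x) = Real.sin θ := by
  obtain ⟨n, hn⟩ := exists_nat_gt ((δ⁻¹ - θ) / (2 * Real.pi))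
  have hc : δ⁻¹ < θ + n * (2 * Real.pi) := by
    rw [div_lt_iff₀ (by positivity)] at hn
    linarith
  have hc0 : 0 < θ + n * (2 * Real.pi) := (inv_pos.2 hδ).trans hc
  refine ⟨1 / (θ + n * (2 * Real.pi)), ⟨one_div_pos.2 hc0, ?_⟩, ?_⟩
  · exact (one_div_lt hc0 hδ).2 (by rwa [one_div])
  · rw [one_div_one_div, Real.sin_add_nat_mul_two_pi]

theorem exists_Phi10_pos {δ : ℝ} (hδ : 0 < δ) : ∃ x ∈ Ioo 0 δ, 0 < Phi10 x := by
  obtain ⟨x, hx, hsin⟩ := exists_mem_Ioo_sin_one_div_eq (Real.pi / 2) hδ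
  refine ⟨x, hx, ?_⟩
  rw [Phi10, if_neg hx.1.ne', hsin, Real.sin_pi_div_two, mul_one]
  exact pow_pos hx.1 3

theorem exists_Phi10_neg {δ : ℝ} (hδ : 0 < δ) : ∃ x ∈ Ioo 0 δ, Phi10 x < 0 := by
  obtain ⟨x, hx, hsin⟩ := exists_mem_Ioo_sin_one_div_eq (-(Real.pi / 2)) hδ
  refine ⟨x, hx, ?_⟩
  rw [Phi10, if_neg hx.1.ne', hsin, Real.sin_neg, Real.sin_pi_div_two, mul_neg_one, neg_lt_zero]
  exact pow_pos hx.1 3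

theorem cbrt10_of_nonneg {y : ℝ} (hy : 0 ≤ y) : cbrt10 y = y ^ (1 / 3 : ℝ) := by
  rcases hy.eq_or_lt with rfl | hy
  · simp [cbrt10]
  · rw [cbrt10, Real.sign_of_pos hy, abs_of_pos hy, one_mul]

theorem cbrt10_pow_three {t : ℝ} (ht : 0 ≤ t) : cbrt10 (t ^ 3) = t := by
  rw [cbrt10_of_nonneg (by positivity), one_div]
  exact_mod_cast Real.pow_rpow_inv_natCast ht (n := 3) (by norm_num)

theorem HasDerivAt.rpow_one_third_of_pos {f : ℝ → ℝ} {t : ℝ}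
    (hf : HasDerivAt f (3 * |f t| ^ (2 / 3 : ℝ)) t) (ht : 0 < f t) :
    HasDerivAt (fun x => f x ^ (1 / 3 : ℝ)) 1 t := by
  convert hf.rpow_const (p := 1 / 3) (Or.inl ht.ne') using 1
  have hprod : f t ^ (2 / 3 : ℝ) * f t ^ (1 / 3 - 1 : ℝ) = 1 := by
    rw [← Real.rpow_add ht]
    norm_num
  rw [abs_of_pos ht]
  linear_combination -hprod

namespace IsSolSys10

theorem zero (ε : ℝ) : IsSolSys10 ε 0 0 := by
  refine ⟨rfl, rfl, fun t _ => ⟨?_, ?_⟩⟩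
  · refine (hasDerivWithinAt_const t (Icc 0 ε) (0 : ℝ)).congr_deriv ?_
    simp
  · refine (hasDerivWithinAt_const t (Icc 0 ε) (0 : ℝ)).congr_deriv ?_
    simp [cbrt10_of_nonneg le_rfl, hasDerivAt_Phi10_zero.deriv]

theorem cube (ε : ℝ) : IsSolSys10 ε (fun t => t ^ 3) Phi10 := by
  refine ⟨by norm_num, Phi10_zero, fun t ht => ⟨?_, ?_⟩⟩
  · have h23 : |t ^ 3| ^ (2 / 3 : ℝ) = t ^ 2 := by
      rw [abs_of_nonneg (by positivity [ht.1]), ← Real.rpow_natCast, ← Real.rpow_mul ht.1]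
      norm_num
    rw [h23]
    exact (hasDerivAt_pow 3 t).hasDerivWithinAt
  · rw [cbrt10_pow_three ht.1]
    exact (differentiable_Phi10 t).hasDerivAt.hasDerivWithinAt

variable {ε : ℝ} {ψ1 ψ2 : ℝ → ℝ}

theorem continuousOn_fst (h : IsSolSys10 ε ψ1 ψ2) : ContinuousOn ψ1 (Icc 0 ε) :=
  fun t ht => (h.2.2 t ht).1.continuousWithinAt

theorem continuousOn_snd (h : IsSolSys10 ε ψ1 ψ2) : ContinuousOn ψ2 (Icc 0 ε) :=
  fun t ht => (h.2.2 t ht).2.continuousWithinAt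

theorem hasDerivAt_fst (h : IsSolSys10 ε ψ1 ψ2) {t : ℝ} (ht : t ∈ Ioo 0 ε) :
    HasDerivAt ψ1 (3 * |ψ1 t| ^ (2 / 3 : ℝ)) t :=
  (h.2.2 t (Ioo_subset_Icc_self ht)).1.hasDerivAt (Icc_mem_nhds ht.1 ht.2)

theorem hasDerivAt_snd (h : IsSolSys10 ε ψ1 ψ2) {t : ℝ} (ht : t ∈ Ioo 0 ε) :
    HasDerivAt ψ2 (deriv Phi10 (cbrt10 (ψ1 t))) t :=
  (h.2.2 t (Ioo_subset_Icc_self ht)).2.hasDerivAt (Icc_mem_nhds ht.1 ht.2)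

theorem monotoneOn_fst (h : IsSolSys10 ε ψ1 ψ2) : MonotoneOn ψ1 (Icc 0 ε) :=
  monotoneOn_of_hasDerivWithinAt_nonneg (convex_Icc 0 ε) h.continuousOn_fst
    (fun t ht => (h.2.2 t (interior_subset ht)).1.mono interior_subset)
    (fun _ _ => by positivity)

theorem exists_shift (h : IsSolSys10 ε ψ1 ψ2) (hε : 0 ≤ ε) :
    ∃ a ∈ Icc 0 ε, EqOn ψ2 0 (Icc 0 a) ∧ EqOn ψ2 (fun t => Phi10 (t - a)) (Icc a ε) := by
  obtain ⟨a, ha, hzero, hpos⟩ := h.monotoneOn_fst.exists_eq_on_Icc_lt_on_Ioc hε h.continuousOn_fst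
  rw [h.1] at hzero hpos
  have hsub : Icc a ε ⊆ Icc 0 ε := Icc_subset_Icc_left ha.1
  have hcbrt : ∀ t ∈ Icc a ε, cbrt10 (ψ1 t) = t - a := by
    have hroot : EqOn (fun t => ψ1 t ^ (1 / 3 : ℝ)) (· - a) (Icc a ε) :=
      eqOn_Icc_of_hasDerivAt_eq
        ((h.continuousOn_fst.mono hsub).rpow_const fun _ _ => Or.inr (by norm_num))
        (continuousOn_id.sub continuousOn_const)
        (fun x hx => (h.hasDerivAt_fst ⟨ha.1.trans_lt hx.1, hx.2⟩).rpow_one_third_of_pos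
          (hpos x ⟨hx.1, hx.2.le⟩))
        (fun x _ => (hasDerivAt_id x).sub_const a)
        (by simp [hzero a ⟨ha.1, le_rfl⟩])
    intro t ht
    rw [cbrt10_of_nonneg (h.1 ▸ h.monotoneOn_fst (left_mem_Icc.2 hε) (hsub ht) (hsub ht).1)]
    exact hroot ht
  have hψ2a : EqOn ψ2 0 (Icc 0 a) :=
    eqOn_Icc_of_hasDerivAt_eq (h.continuousOn_snd.mono (Icc_subset_Icc_right ha.2))
      continuousOn_const
      (fun x hx => by
        simpa [hzero x (Ioo_subset_Icc_self hx), cbrt10_of_nonneg le_rfl,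
          hasDerivAt_Phi10_zero.deriv] using h.hasDerivAt_snd ⟨hx.1, hx.2.trans_le ha.2⟩)
      (fun x _ => hasDerivAt_const x 0) h.2.1
  refine ⟨a, ha, hψ2a, eqOn_Icc_of_hasDerivAt_eq (h.continuousOn_snd.mono hsub)
    (differentiable_Phi10.continuous.comp (continuous_sub_right a)).continuousOn
    (f' := fun x => deriv Phi10 (x - a)) (fun x hx => ?_) (fun x _ => ?_) ?_⟩
  · rw [← hcbrt x (Ioo_subset_Icc_self hx)]
    exact h.hasDerivAt_snd ⟨ha.1.trans_lt hx.1, hx.2⟩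
  · exact (differentiable_Phi10 (x - a)).hasDerivAt.comp_sub_const x a
  · simp [hψ2a ⟨ha.1, le_rfl⟩, Phi10_zero]

end IsSolSys10

/-- The system `y1' = 3|y1|^(2/3)`, `y2' = Φ'(y1^(1/3))` with zero initial data
has no solution whose second component dominates that of every other solution. -/
theorem no_greatest_second_component :
    ∀ ε > (0:ℝ),
      ¬ ∃ ψ1 ψ2 : ℝ → ℝ, IsSolSys10 ε ψ1 ψ2 ∧
        ∀ χ1 χ2 : ℝ → ℝ, IsSolSys10 ε χ1 χ2 →
          ∀ t ∈ Icc (0:ℝ) ε, χ2 t ≤ ψ2 t := by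
  rintro ε hε ⟨ψ1, ψ2, hψ, hmax⟩
  obtain ⟨a, ha, hzero, hshift⟩ := hψ.exists_shift hε.le
  rcases ha.2.eq_or_lt with rfl | haε
  · obtain ⟨x, hx, hpos⟩ := exists_Phi10_pos hε
    have hle := hmax _ _ (IsSolSys10.cube a) x (Ioo_subset_Icc_self hx)
    rw [hzero (Ioo_subset_Icc_self hx)] at hle
    exact hpos.not_ge hle
  · obtain ⟨x, hx, hneg⟩ := exists_Phi10_neg (sub_pos.2 haε)
    have hat : a + x ∈ Icc a ε := ⟨by linarith [hx.1], by linarith [hx.2]⟩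
    have hle : 0 ≤ ψ2 (a + x) := hmax _ _ (IsSolSys10.zero ε) (a + x) ⟨ha.1.trans hat.1, hat.2⟩
    have hval : ψ2 (a + x) = Phi10 x := by simpa using hshift hat
    exact hneg.not_ge (hval ▸ hle)
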